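/- Let p, q : ℝ^d → (0, ∞) be continuously differentiable probability densities whose scores ∇ log p and ∇ log q are continuous and bounded on ℝ^d, and suppose in addition that p and q are continuous and bounded. Fix x ∈ ℝ^d with (∇ log q)(x) ≠ (∇ log p)(x). For σ > 0 define the posterior densities q_σ(y | x) = q(y)·exp(−‖x − y‖²/(2σ²)) / ∫ q(z)·exp(−‖x − z‖²/(2σ²)) dz and p_σ(y | x) analogously with q replaced by p. Then there exists σ₀ > 0 such that for all σ ∈ (0, σ₀): ‖∫ (∇ log p)(y)·q_σ(y | x) dy − ∫ (∇ log p)(y)·p_σ(y | x) dy‖ < ‖∫ (∇ log q)(y)·q_σ(y | x) dy − ∫ (∇ log p)(y)·p_σ(y | x) dy‖. That is, at sufficiently small noise levels, the PSM label (posterior expectation under the biased data posterior q_σ(· | x) of the true score ∇ log p) is strictly closer to the ground-truth score label (posterior expectation under the true posterior p_σ(· | x) of ∇ log p) than the DSM label (posterior expectation under q_σ(· | x) of the data score ∇ log q). -/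

import Mathlib

/-!
As `σ → 0` the posterior `r_σ(· | x)` concentrates at `x` as soon as `r` has positive mass in
every ball around `x`: outside the `δ`-ball the Gaussian weight is at most `exp (-δ²/(2σ²))`,
while on the `δ/2`-ball it is at least `exp (-δ²/(8σ²))`. Hence posterior means of bounded `g`
continuous at `x` tend to `g x`. The PSM label minus the true label therefore tends to
`∇ log p x - ∇ log p x = 0`, whereas the DSM label minus the true label tends to
`∇ log q x - ∇ log p x ≠ 0`.
-/

open MeasureTheory Filter Metric Real
open scoped Topology

noncomputable section

section GaussianKernel

variable {E : Type*} [NormedAddCommGroup E]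

def gaussianKernel (x : E) (σ : ℝ) (y : E) : ℝ := exp (-‖x - y‖ ^ 2 / (2 * σ ^ 2))

lemma gaussianKernel_pos (x : E) (σ : ℝ) (y : E) : 0 < gaussianKernel x σ y := exp_pos _

lemma gaussianKernel_le_one (x : E) (σ : ℝ) (y : E) : gaussianKernel x σ y ≤ 1 :=
  exp_le_one_iff.mpr <| div_nonpos_of_nonpos_of_nonneg (neg_nonpos.mpr (by positivity))
    (by positivity)

lemma continuous_gaussianKernel (x : E) (σ : ℝ) : Continuous (gaussianKernel x σ) := by
  unfold gaussianKernel; fun_prop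

lemma gaussianKernel_le_of_le_norm {x y : E} {ρ : ℝ} (σ : ℝ) (hρ : 0 ≤ ρ) (h : ρ ≤ ‖x - y‖) :
    gaussianKernel x σ y ≤ exp (-ρ ^ 2 / (2 * σ ^ 2)) := by
  unfold gaussianKernel
  gcongr

lemma le_gaussianKernel_of_norm_le {x y : E} {ρ : ℝ} (σ : ℝ) (h : ‖x - y‖ ≤ ρ) :
    exp (-ρ ^ 2 / (2 * σ ^ 2)) ≤ gaussianKernel x σ y := by
  unfold gaussianKernel
  gcongr

lemma tendsto_exp_neg_div_sq_nhdsNE_zero {a : ℝ} (ha : 0 < a) :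
    Tendsto (fun σ : ℝ => exp (-a / σ ^ 2)) (𝓝[≠] 0) (𝓝 0) := by
  have hsq : Tendsto (fun σ : ℝ => σ ^ 2) (𝓝[≠] 0) (𝓝[>] 0) := by
    refine tendsto_nhdsWithin_of_tendsto_nhds_of_eventually_within _ ?_
      (eventually_nhdsWithin_of_forall fun σ hσ => sq_pos_of_ne_zero hσ)
    exact ((continuous_pow 2).tendsto' 0 0 (zero_pow two_ne_zero)).mono_left nhdsWithin_le_nhds
  have := (tendsto_inv_nhdsGT_zero.comp hsq).const_mul_atTop ha
  refine (tendsto_exp_atBot.comp (tendsto_neg_atTop_atBot.comp this)).congr fun σ => ?_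
  simp [div_eq_mul_inv]

end GaussianKernel

section PosteriorMean

variable {E F : Type*} [NormedAddCommGroup E] [MeasurableSpace E] {μ : Measure E}
  [NormedAddCommGroup F] [NormedSpace ℝ F]

def posteriorMean (μ : Measure E) (r : E → ℝ) (g : E → F) (x : E) (σ : ℝ) : F :=
  ∫ y, (r y * gaussianKernel x σ y / ∫ z, r z * gaussianKernel x σ z ∂μ) • g y ∂μ

lemma setIntegral_ball_pos [μ.IsOpenPosMeasure] {r : E → ℝ} (hr : ∀ y, 0 < r y)
    (hrI : Integrable r μ) (x : E) {ρ : ℝ} (hρ : 0 < ρ) : 0 < ∫ y in ball x ρ, r y ∂μ := by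
  rw [setIntegral_pos_iff_support_of_nonneg_ae (ae_of_all _ fun y => (hr y).le) hrI.integrableOn]
  simpa [Function.support, fun y => (hr y).ne'] using measure_ball_pos μ x hρ

variable [OpensMeasurableSpace E] [CompleteSpace F]

lemma MeasureTheory.Integrable.mul_gaussianKernel {r : E → ℝ} (hr : Integrable r μ) (x : E)
    (σ : ℝ) :
    Integrable (fun y => r y * gaussianKernel x σ y) μ :=
  hr.mul_bdd (continuous_gaussianKernel x σ).aestronglyMeasurable <| ae_of_all _ fun y => by
    rw [norm_of_nonneg (gaussianKernel_pos x σ y).le]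
    exact gaussianKernel_le_one x σ y

lemma exp_mul_setIntegral_ball_le_integral_mul_gaussianKernel {r : E → ℝ} (hr0 : 0 ≤ r)
    (hrI : Integrable r μ) (x : E) (σ ρ : ℝ) :
    exp (-ρ ^ 2 / (2 * σ ^ 2)) * ∫ y in ball x ρ, r y ∂μ ≤
      ∫ y, r y * gaussianKernel x σ y ∂μ := by
  have hI := hrI.mul_gaussianKernel x σ
  calc exp (-ρ ^ 2 / (2 * σ ^ 2)) * ∫ y in ball x ρ, r y ∂μ
      = ∫ y in ball x ρ, r y * exp (-ρ ^ 2 / (2 * σ ^ 2)) ∂μ := by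
        rw [← integral_const_mul]; simp_rw [mul_comm]
    _ ≤ ∫ y in ball x ρ, r y * gaussianKernel x σ y ∂μ := by
        refine setIntegral_mono_on (hrI.mul_const _).integrableOn hI.integrableOn
          measurableSet_ball fun y hy => mul_le_mul_of_nonneg_left ?_ (hr0 y)
        exact le_gaussianKernel_of_norm_le σ (by rw [← dist_eq_norm, dist_comm]; exact hy.le)
    _ ≤ ∫ y, r y * gaussianKernel x σ y ∂μ :=
        setIntegral_le_integral hI <| ae_of_all _ fun y =>
          mul_nonneg (hr0 y) (gaussianKernel_pos x σ y).le

lemma norm_posteriorMean_sub_le {r : E → ℝ} {g : E → F} {x : E} {β η δ σ : ℝ} (hr0 : 0 ≤ r)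
    (hrI : Integrable r μ) (hgm : AEStronglyMeasurable g μ) (hgb : ∀ y, ‖g y‖ ≤ β) (hδ : 0 < δ)
    (hgδ : ∀ y, dist y x < δ → ‖g y - g x‖ ≤ η)
    (hZ : 0 < ∫ z, r z * gaussianKernel x σ z ∂μ) :
    ‖posteriorMean μ r g x σ - g x‖ ≤
      η + 2 * β * exp (-δ ^ 2 / (2 * σ ^ 2)) / (∫ z, r z * gaussianKernel x σ z ∂μ) *
        ∫ y, r y ∂μ := by
  set Z := ∫ z, r z * gaussianKernel x σ z ∂μ
  set C := 2 * β * exp (-δ ^ 2 / (2 * σ ^ 2))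
  set w := fun y => r y * gaussianKernel x σ y / Z
  have hη : 0 ≤ η := (norm_nonneg _).trans (hgδ x (by rwa [dist_self]))
  have hβ : 0 ≤ β := (norm_nonneg _).trans (hgb x)
  have hw0 (y : E) : 0 ≤ w y := div_nonneg (mul_nonneg (hr0 y) (gaussianKernel_pos x σ y).le) hZ.le
  have hC : 0 ≤ C := by positivity
  have hwI : Integrable w μ := (hrI.mul_gaussianKernel x σ).div_const Z
  have hw1 : ∫ y, w y ∂μ = 1 := by rw [integral_div, div_self hZ.ne']
  have hwg : Integrable (fun y => w y • g y) μ := hwI.smul_bdd β hgm (ae_of_all _ hgb)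
  have hmean : posteriorMean μ r g x σ - g x = ∫ y, w y • (g y - g x) ∂μ := by
    simp only [smul_sub]
    rw [integral_sub hwg (hwI.smul_const _), integral_smul_const, hw1, one_smul]
    rfl
  have hpointwise (y : E) : ‖w y • (g y - g x)‖ ≤ η * w y + C / Z * r y := by
    rw [norm_smul, norm_of_nonneg (hw0 y), mul_comm]
    by_cases hy : dist y x < δ
    · have : 0 ≤ C / Z * r y := mul_nonneg (div_nonneg hC hZ.le) (hr0 y)
      nlinarith [hgδ y hy, hw0 y]
    · have hfar : gaussianKernel x σ y ≤ exp (-δ ^ 2 / (2 * σ ^ 2)) :=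
        gaussianKernel_le_of_le_norm σ hδ.le (by rw [← dist_eq_norm, dist_comm]; exact not_lt.mp hy)
      have hdiff : ‖g y - g x‖ ≤ 2 * β := by linarith [norm_sub_le (g y) (g x), hgb y, hgb x]
      calc ‖g y - g x‖ * w y ≤ 2 * β * (r y * exp (-δ ^ 2 / (2 * σ ^ 2)) / Z) := by
            gcongr
            · exact hw0 y
            · exact div_le_div_of_nonneg_right (mul_le_mul_of_nonneg_left hfar (hr0 y)) hZ.le
        _ = C / Z * r y := by ring
        _ ≤ η * w y + C / Z * r y := le_add_of_nonneg_left (mul_nonneg hη (hw0 y))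
  calc ‖posteriorMean μ r g x σ - g x‖
      ≤ ∫ y, (η * w y + C / Z * r y) ∂μ :=
        hmean ▸ norm_integral_le_of_norm_le ((hwI.const_mul η).add (hrI.const_mul _))
          (ae_of_all _ hpointwise)
    _ = η + C / Z * ∫ y, r y ∂μ := by
        rw [integral_add (hwI.const_mul η) (hrI.const_mul _), integral_const_mul,
          integral_const_mul, hw1, mul_one]

lemma tendsto_posteriorMean {r : E → ℝ} {g : E → F} {x : E} {β : ℝ} (hr0 : 0 ≤ r)
    (hrI : Integrable r μ) (hx : ∀ ρ > 0, 0 < ∫ y in ball x ρ, r y ∂μ)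
    (hgm : AEStronglyMeasurable g μ) (hgx : ContinuousAt g x) (hgb : ∀ y, ‖g y‖ ≤ β) :
    Tendsto (posteriorMean μ r g x) (𝓝[≠] 0) (𝓝 (g x)) := by
  rw [Metric.tendsto_nhds]
  intro ε hε
  obtain ⟨δ, hδ, hgδ⟩ := Metric.continuousAt_iff.mp hgx (ε / 2) (half_pos hε)
  set R := ∫ y, r y ∂μ
  set c := ∫ y in ball x (δ / 2), r y ∂μ
  have hc : 0 < c := hx (δ / 2) (half_pos hδ)
  have hβ : 0 ≤ β := (norm_nonneg _).trans (hgb x)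
  have hR : 0 ≤ R := integral_nonneg hr0
  have hsmall : ∀ᶠ σ in 𝓝[≠] 0, 2 * β * R / c * exp (-(3 * δ ^ 2 / 8) / σ ^ 2) < ε / 2 := by
    have := (tendsto_exp_neg_div_sq_nhdsNE_zero (a := 3 * δ ^ 2 / 8) (by positivity)).const_mul
      (2 * β * R / c)
    rw [mul_zero] at this
    exact this.eventually_lt_const (half_pos hε)
  filter_upwards [hsmall] with σ hσ
  set Z := ∫ z, r z * gaussianKernel x σ z ∂μ
  have hZ := exp_mul_setIntegral_ball_le_integral_mul_gaussianKernel hr0 hrI x σ (δ / 2)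
  have hZpos : 0 < Z := (mul_pos (exp_pos _) hc).trans_le hZ
  have hmean := norm_posteriorMean_sub_le hr0 hrI hgm hgb hδ
    (fun y hy => (dist_eq_norm (g y) (g x) ▸ hgδ hy).le) hZpos
  have herr : 2 * β * exp (-δ ^ 2 / (2 * σ ^ 2)) / Z * R ≤
      2 * β * R / c * exp (-(3 * δ ^ 2 / 8) / σ ^ 2) :=
    calc 2 * β * exp (-δ ^ 2 / (2 * σ ^ 2)) / Z * R
        ≤ 2 * β * exp (-δ ^ 2 / (2 * σ ^ 2)) / (exp (-(δ / 2) ^ 2 / (2 * σ ^ 2)) * c) * R := by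
          gcongr
      _ = 2 * β * R / c * exp (-δ ^ 2 / (2 * σ ^ 2) - -(δ / 2) ^ 2 / (2 * σ ^ 2)) := by
          rw [exp_sub]; field_simp
      _ = 2 * β * R / c * exp (-(3 * δ ^ 2 / 8) / σ ^ 2) := by ring_nf
  rw [dist_eq_norm]
  linarith

end PosteriorMean

lemma ContDiff.continuous_gradient {E : Type*} [NormedAddCommGroup E] [InnerProductSpace ℝ E]
    [CompleteSpace E] {f : E → ℝ} (hf : ContDiff ℝ 1 f) : Continuous (gradient f) :=
  (InnerProductSpace.toDual ℝ E).symm.continuous.comp (hf.continuous_fderiv one_ne_zero)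

lemma Filter.Tendsto.eventually_norm_sub_lt_norm_sub {α F : Type*} [NormedAddCommGroup F]
    {l : Filter α} {f₁ f₂ f₃ : α → F} {a b : F} (h₁ : Tendsto f₁ l (𝓝 a))
    (h₂ : Tendsto f₂ l (𝓝 a)) (h₃ : Tendsto f₃ l (𝓝 b)) (hab : b ≠ a) :
    ∀ᶠ t in l, ‖f₁ t - f₂ t‖ < ‖f₃ t - f₂ t‖ := by
  have h₁₂ : Tendsto (fun t => ‖f₁ t - f₂ t‖) l (𝓝 0) := by simpa using (h₁.sub h₂).norm
  exact h₁₂.eventually_lt (h₃.sub h₂).norm (norm_pos_iff.mpr (sub_ne_zero.mpr hab))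

end

theorem psm_label_closer_than_dsm_label_general (d : ℕ)
    (p q : EuclideanSpace ℝ (Fin d) → ℝ)
    (hp : ContDiff ℝ 1 p) (hq : ContDiff ℝ 1 q)
    (hppos : ∀ y, 0 < p y) (hqpos : ∀ y, 0 < q y)
    (hpI : Integrable p) (hqI : Integrable q)
    (hspb : ∃ C, ∀ y, ‖gradient (fun z => Real.log (p z)) y‖ ≤ C)
    (hsqb : ∃ C, ∀ y, ‖gradient (fun z => Real.log (q z)) y‖ ≤ C)
    (x : EuclideanSpace ℝ (Fin d))
    (hne : gradient (fun z => Real.log (q z)) x ≠ gradient (fun z => Real.log (p z)) x) :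
    ∃ σ₀ > (0 : ℝ), ∀ σ ∈ Set.Ioo (0 : ℝ) σ₀,
      ‖(∫ y, ((q y * Real.exp (-‖x - y‖ ^ 2 / (2 * σ ^ 2))) /
              ∫ z, q z * Real.exp (-‖x - z‖ ^ 2 / (2 * σ ^ 2))) •
            gradient (fun z => Real.log (p z)) y)
        - ∫ y, ((p y * Real.exp (-‖x - y‖ ^ 2 / (2 * σ ^ 2))) /
              ∫ z, p z * Real.exp (-‖x - z‖ ^ 2 / (2 * σ ^ 2))) •
            gradient (fun z => Real.log (p z)) y‖
      < ‖(∫ y, ((q y * Real.exp (-‖x - y‖ ^ 2 / (2 * σ ^ 2))) /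
              ∫ z, q z * Real.exp (-‖x - z‖ ^ 2 / (2 * σ ^ 2))) •
            gradient (fun z => Real.log (q z)) y)
        - ∫ y, ((p y * Real.exp (-‖x - y‖ ^ 2 / (2 * σ ^ 2))) /
              ∫ z, p z * Real.exp (-‖x - z‖ ^ 2 / (2 * σ ^ 2))) •
            gradient (fun z => Real.log (p z)) y‖ := by
  obtain ⟨Cp, hCp⟩ := hspb
  obtain ⟨Cq, hCq⟩ := hsqb
  have hsp := (hp.log fun z => (hppos z).ne').continuous_gradient
  have hsq := (hq.log fun z => (hqpos z).ne').continuous_gradient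
  have mean_tendsto {r : EuclideanSpace ℝ (Fin d) → ℝ} (hr : ∀ y, 0 < r y) (hrI : Integrable r)
      {g : EuclideanSpace ℝ (Fin d) → EuclideanSpace ℝ (Fin d)} (hg : Continuous g) {C : ℝ}
      (hgC : ∀ y, ‖g y‖ ≤ C) : Tendsto (posteriorMean volume r g x) (𝓝[>] 0) (𝓝 (g x)) :=
    (tendsto_posteriorMean (fun y => (hr y).le) hrI (fun _ => setIntegral_ball_pos hr hrI x)
      hg.aestronglyMeasurable hg.continuousAt hgC).mono_left (nhdsGT_le_nhdsNE 0)
  obtain ⟨σ₀, hσ₀, hsub⟩ := mem_nhdsGT_iff_exists_Ioo_subset.mp <|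
    (mean_tendsto hqpos hqI hsp hCp).eventually_norm_sub_lt_norm_sub
      (mean_tendsto hppos hpI hsp hCp) (mean_tendsto hqpos hqI hsq hCq) hne
  exact ⟨σ₀, hσ₀, fun σ hσ => hsub hσ⟩

/-- **PSM label is closer to the ground truth than the DSM label at small noise.**
Let `p, q : ℝ^d → (0, ∞)` be `C¹` probability densities, with `p`, `q` and the
scores `∇ log p`, `∇ log q` bounded, and fix `x` with `(∇ log q)(x) ≠ (∇ log p)(x)`.
For `σ > 0` let `q_σ(· | x)` and `p_σ(· | x)` be the Gaussian posteriors
`r_σ(y | x) ∝ r(y) exp(−‖x − y‖²/(2σ²))`.  Then there exists `σ₀ > 0` such that for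
all `σ ∈ (0, σ₀)`,
`‖E_{q_σ(·|x)}[∇ log p] − E_{p_σ(·|x)}[∇ log p]‖ < ‖E_{q_σ(·|x)}[∇ log q] − E_{p_σ(·|x)}[∇ log p]‖`. -/
theorem psm_label_closer_than_dsm_label (d : ℕ)
    (p q : EuclideanSpace ℝ (Fin d) → ℝ)
    (hp : ContDiff ℝ 1 p) (hq : ContDiff ℝ 1 q)
    (hppos : ∀ y, 0 < p y) (hqpos : ∀ y, 0 < q y)
    (hpI : Integrable p) (hqI : Integrable q)
    (hpP : ∫ y, p y = 1) (hqP : ∫ y, q y = 1)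
    (hpb : ∃ C, ∀ y, p y ≤ C) (hqb : ∃ C, ∀ y, q y ≤ C)
    (hspb : ∃ C, ∀ y, ‖gradient (fun z => Real.log (p z)) y‖ ≤ C)
    (hsqb : ∃ C, ∀ y, ‖gradient (fun z => Real.log (q z)) y‖ ≤ C)
    (x : EuclideanSpace ℝ (Fin d))
    (hne : gradient (fun z => Real.log (q z)) x ≠ gradient (fun z => Real.log (p z)) x) :
    ∃ σ₀ > (0 : ℝ), ∀ σ ∈ Set.Ioo (0 : ℝ) σ₀,
      ‖(∫ y, ((q y * Real.exp (-‖x - y‖ ^ 2 / (2 * σ ^ 2))) /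
              ∫ z, q z * Real.exp (-‖x - z‖ ^ 2 / (2 * σ ^ 2))) •
            gradient (fun z => Real.log (p z)) y)
        - ∫ y, ((p y * Real.exp (-‖x - y‖ ^ 2 / (2 * σ ^ 2))) /
              ∫ z, p z * Real.exp (-‖x - z‖ ^ 2 / (2 * σ ^ 2))) •
            gradient (fun z => Real.log (p z)) y‖
      < ‖(∫ y, ((q y * Real.exp (-‖x - y‖ ^ 2 / (2 * σ ^ 2))) /
              ∫ z, q z * Real.exp (-‖x - z‖ ^ 2 / (2 * σ ^ 2))) •
            gradient (fun z => Real.log (q z)) y)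
        - ∫ y, ((p y * Real.exp (-‖x - y‖ ^ 2 / (2 * σ ^ 2))) /
              ∫ z, p z * Real.exp (-‖x - z‖ ^ 2 / (2 * σ ^ 2))) •
            gradient (fun z => Real.log (p z)) y‖ :=
  psm_label_closer_than_dsm_label_general d p q hp hq hppos hqpos hpI hqI hspb hsqb x hne
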